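/- Let n ≥ 2 and let f be an (n-1)-times differentiable function on [a,b] such that f⁽ⁱ⁾ ≥ 0 for i = 0,…,n-2, f⁽ⁿ⁻¹⁾ is strictly positive on [a,b], and f/f⁽ⁿ⁻¹⁾ is bounded on [a,b]. Set A := sup{|f(x)/f⁽ⁿ⁻¹⁾(x)| : x ∈ [a,b]}. Then (b-a)·f(a)ⁿ + ((n-1)/(n!·A))·(∫_a^b f)ⁿ ≤ ∫_a^b fⁿ. -/

import Mathlib

/-!
Write `F x = ∫ t in a..x, f t` and `D k = f⁽ᵏ⁾`, `n = m + 2`. Every step compares two functions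
vanishing (or ordered) at `a` through their derivatives on `(a, b)`. Starting from `f ≤ A D (m+1)`
and integrating, an induction on `j` gives `F ^ j f ≤ j! A f ^ j D (m + 1 - j)`; at `j = m` this is
`F ^ m f ≤ m! A f ^ m f'`, which integrates to `F ^ (m+1) ≤ m! A f ^ (m+1)` and then to
`F ^ (m+1) f ≤ m! A (f ^ n - f a ^ n)`. The left side is `(F ^ n)' / n`, so a last integration
gives the theorem.
-/

open Set MeasureTheory
open scoped Nat

theorem le_of_hasDerivAt_le_of_le {a b x : ℝ} {u v u' v' : ℝ → ℝ}
    (hu : ContinuousOn u (Icc a b)) (hv : ContinuousOn v (Icc a b))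
    (hu' : ∀ y ∈ Ioo a b, HasDerivAt u (u' y) y) (hv' : ∀ y ∈ Ioo a b, HasDerivAt v (v' y) y)
    (hle : ∀ y ∈ Ioo a b, u' y ≤ v' y) (ha : u a ≤ v a) (hx : x ∈ Icc a b) : u x ≤ v x := by
  have hmono : MonotoneOn (v - u) (Icc a b) := by
    refine monotoneOn_of_hasDerivWithinAt_nonneg (f' := v' - u') (convex_Icc a b) (hv.sub hu)
      ?_ ?_ <;> rw [interior_Icc]
    · exact fun y hy => ((hv' y hy).sub (hu' y hy)).hasDerivWithinAt
    · exact fun y hy => sub_nonneg.2 (hle y hy)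
  have := hmono (left_mem_Icc.2 (hx.1.trans hx.2)) hx hx.1
  simp only [Pi.sub_apply] at this
  linarith

theorem hasDerivAt_iteratedDerivWithin_Icc {a b x : ℝ} {f : ℝ → ℝ} {k : ℕ}
    (h : DifferentiableOn ℝ (iteratedDerivWithin k f (Icc a b)) (Icc a b)) (hx : x ∈ Ioo a b) :
    HasDerivAt (iteratedDerivWithin k f (Icc a b))
      (iteratedDerivWithin (k + 1) f (Icc a b) x) x := by
  rw [iteratedDerivWithin_succ]
  exact (h x (Ioo_subset_Icc_self hx)).hasDerivWithinAt.hasDerivAt (Icc_mem_nhds hx.1 hx.2)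

theorem continuousOn_primitive_Icc {a b : ℝ} {g : ℝ → ℝ} (hab : a ≤ b)
    (hg : ContinuousOn g (Icc a b)) : ContinuousOn (fun y => ∫ t in a..y, g t) (Icc a b) := by
  rw [← uIcc_of_le hab] at hg ⊢
  exact intervalIntegral.continuousOn_primitive_interval hg.integrableOn_uIcc

theorem hasDerivAt_primitive_of_mem_Ioo {a b x : ℝ} {g : ℝ → ℝ}
    (hg : ContinuousOn g (Icc a b)) (hx : x ∈ Ioo a b) :
    HasDerivAt (fun y => ∫ t in a..y, g t) (g x) x := by
  refine intervalIntegral.integral_hasDerivAt_right ?_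
    (hg.mono Ioo_subset_Icc_self |>.stronglyMeasurableAtFilter isOpen_Ioo x hx)
    ((hg x (Ioo_subset_Icc_self hx)).continuousAt (Icc_mem_nhds hx.1 hx.2))
  exact (hg.mono (by rw [uIcc_of_le hx.1.le]; exact Icc_subset_Icc le_rfl hx.2.le))
    |>.intervalIntegrable

theorem pow_mul_le_factorial_mul_pow_mul {a b A : ℝ} {m j : ℕ} {f F : ℝ → ℝ} {D : ℕ → ℝ → ℝ}
    (hD0 : D 0 = f) (hA : 0 ≤ A) (hcont : ∀ k ≤ m, ContinuousOn (D k) (Icc a b))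
    (hderiv : ∀ k ≤ m, ∀ x ∈ Ioo a b, HasDerivAt (D k) (D (k + 1) x) x)
    (hnonneg : ∀ k ≤ m + 1, ∀ x ∈ Icc a b, 0 ≤ D k x)
    (hbound : ∀ x ∈ Icc a b, f x ≤ A * D (m + 1) x)
    (hF : ContinuousOn F (Icc a b)) (hF' : ∀ x ∈ Ioo a b, HasDerivAt F (f x) x)
    (hFa : F a = 0) (hj : j ≤ m) {x : ℝ} (hx : x ∈ Icc a b) :
    F x ^ j * f x ≤ j ! * A * f x ^ j * D (m + 1 - j) x := by
  subst hD0
  induction j generalizing x with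
  | zero => simpa using hbound x hx
  | succ j ih =>
    have hF_pow_le : F x ^ (j + 1) ≤ (j + 1)! * A * D 0 x ^ j * D (m - j) x := by
      refine le_of_hasDerivAt_le_of_le (u := fun y => F y ^ (j + 1))
        (v := fun y => (j + 1)! * A * D 0 y ^ j * D (m - j) y) (hF.pow _)
        ((continuousOn_const.mul ((hcont 0 (by omega)).pow j)).mul (hcont _ (by omega)))
        (fun y hy => (hF' y hy).pow _)
        (fun y hy => (((hderiv 0 (by omega) y hy).pow j).const_mul _).mul
          (hderiv _ (by omega) y hy)) (fun y hy => ?_) ?_ hx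
      · have hy' := Ioo_subset_Icc_self hy
        have hD0y := hnonneg 0 (by omega) y hy'
        have hD1y := hnonneg 1 (by omega) y hy'
        have hDy := hnonneg (m - j) (by omega) y hy'
        rw [show m - j + 1 = m + 1 - j by omega, Nat.factorial_succ, Pi.pow_apply]
        push_cast
        calc (j + 1 : ℝ) * F y ^ j * D 0 y = (j + 1) * (F y ^ j * D 0 y) := by ring
          _ ≤ (j + 1) * (j ! * A * D 0 y ^ j * D (m + 1 - j) y) :=
            mul_le_mul_of_nonneg_left (ih (by omega) hy') (by positivity)
          _ = (j + 1) * j ! * A * D 0 y ^ j * D (m + 1 - j) y := by ring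
          _ ≤ _ := le_add_of_nonneg_left (by positivity)
      · have ha := left_mem_Icc.2 (hx.1.trans hx.2)
        have hD0a := hnonneg 0 (by omega) a ha
        have hDa := hnonneg (m - j) (by omega) a ha
        rw [hFa, zero_pow j.succ_ne_zero]
        positivity
    rw [show m + 1 - (j + 1) = m - j by omega]
    calc F x ^ (j + 1) * D 0 x ≤ (j + 1)! * A * D 0 x ^ j * D (m - j) x * D 0 x :=
          mul_le_mul_of_nonneg_right hF_pow_le (hnonneg 0 (by omega) x hx)
      _ = (j + 1)! * A * D 0 x ^ (j + 1) * D (m - j) x := by ring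

theorem pow_succ_mul_le_mul_pow_sub_pow {a b K : ℝ} {m : ℕ} {f f' F : ℝ → ℝ} (hK : 0 ≤ K)
    (hf : ContinuousOn f (Icc a b)) (hf' : ∀ x ∈ Ioo a b, HasDerivAt f (f' x) x)
    (hf_nonneg : ∀ x ∈ Icc a b, 0 ≤ f x) (hf'_nonneg : ∀ x ∈ Ioo a b, 0 ≤ f' x)
    (hF : ContinuousOn F (Icc a b)) (hF' : ∀ x ∈ Ioo a b, HasDerivAt F (f x) x) (hFa : F a = 0)
    (hFf : ∀ x ∈ Ioo a b, F x ^ m * f x ≤ K * f x ^ m * f' x) {x : ℝ} (hx : x ∈ Icc a b) :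
    F x ^ (m + 1) * f x ≤ K * (f x ^ (m + 2) - f a ^ (m + 2)) := by
  have ha : a ∈ Icc a b := left_mem_Icc.2 (hx.1.trans hx.2)
  have hF_pow_le : ∀ y ∈ Ioo a b, F y ^ (m + 1) ≤ K * f y ^ (m + 1) := fun y hy =>
    le_of_hasDerivAt_le_of_le (u := fun y => F y ^ (m + 1)) (v := fun y => K * f y ^ (m + 1))
      (hF.pow _) (continuousOn_const.mul (hf.pow _)) (fun z hz => (hF' z hz).pow _)
      (fun z hz => ((hf' z hz).pow _).const_mul K)
      (fun z hz => by
        have hfz := hf_nonneg z (Ioo_subset_Icc_self hz)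
        have hf'z := hf'_nonneg z hz
        calc ((m + 1 : ℕ) : ℝ) * F z ^ m * f z = (m + 1 : ℕ) * (F z ^ m * f z) := by ring
          _ ≤ (m + 1 : ℕ) * (K * f z ^ m * f' z) :=
            mul_le_mul_of_nonneg_left (hFf z hz) (by positivity)
          _ = _ := by simp only [Nat.add_sub_cancel]; ring)
      (by rw [hFa, zero_pow m.succ_ne_zero]; have hfa := hf_nonneg a ha; positivity)
      (Ioo_subset_Icc_self hy)
  refine le_of_hasDerivAt_le_of_le (u := fun y => F y ^ (m + 1) * f y)
    (v := fun y => K * (f y ^ (m + 2) - f a ^ (m + 2)))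
    ((hF.pow _).mul hf) (continuousOn_const.mul ((hf.pow _).sub continuousOn_const))
    (fun z hz => ((hF' z hz).pow _).mul (hf' z hz))
    (fun z hz => (((hf' z hz).pow _).sub_const _).const_mul K) (fun z hz => ?_)
    (by simp [hFa]) hx
  have hfz := hf_nonneg z (Ioo_subset_Icc_self hz)
  have h1 := mul_le_mul_of_nonneg_right (hFf z hz) (by positivity : (0 : ℝ) ≤ (m + 1 : ℕ) * f z)
  have h2 := mul_le_mul_of_nonneg_right (hF_pow_le z hz) (hf'_nonneg z hz)
  simp only [Pi.pow_apply, Nat.add_sub_cancel, show m + 2 - 1 = m + 1 by omega]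
  push_cast at h1 ⊢
  linear_combination h1 + h2

theorem mul_pow_add_pow_div_le_integral_pow_of_pow_mul_le {a b K : ℝ} {n : ℕ} {f : ℝ → ℝ}
    (hab : a ≤ b) (hK : 0 ≤ K) (hf : ContinuousOn f (Icc a b)) (hfa_le : ∀ x ∈ Ioo a b, f a ≤ f x)
    (hfa : 0 ≤ f a)
    (h : ∀ x ∈ Ioo a b, (∫ t in a..x, f t) ^ n * f x ≤ K * (f x ^ (n + 1) - f a ^ (n + 1))) :
    (b - a) * f a ^ (n + 1) + (∫ x in a..b, f x) ^ (n + 1) / ((n + 1) * K) ≤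
      ∫ x in a..b, f x ^ (n + 1) := by
  have hF := continuousOn_primitive_Icc hab hf
  refine le_of_hasDerivAt_le_of_le
    (u := fun y => (y - a) * f a ^ (n + 1) + (∫ t in a..y, f t) ^ (n + 1) / ((n + 1) * K))
    (v := fun y => ∫ t in a..y, f t ^ (n + 1))
    (((continuousOn_id.sub continuousOn_const).mul continuousOn_const).add
      ((hF.pow _).div_const _))
    (continuousOn_primitive_Icc hab (hf.pow _))
    (fun y hy => ((((hasDerivAt_id y).sub_const a).mul_const _).add
      (((hasDerivAt_primitive_of_mem_Ioo hf hy).pow _).div_const _)))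
    (fun y hy => hasDerivAt_primitive_of_mem_Ioo (hf.pow _) hy) (fun y hy => ?_)
    (by simp) (right_mem_Icc.2 hab)
  have hpow_le : f a ^ (n + 1) ≤ f y ^ (n + 1) := pow_le_pow_left₀ hfa (hfa_le y hy) _
  rw [Nat.add_sub_cancel, mul_assoc, Nat.cast_add_one, mul_div_mul_left _ _ n.cast_add_one_ne_zero]
  have := div_le_of_le_mul₀ hK (sub_nonneg.2 hpow_le) (mul_comm K _ ▸ h y hy)
  linarith

theorem mul_pow_add_pow_div_le_integral_pow {a b A : ℝ} {m : ℕ} {f : ℝ → ℝ} {D : ℕ → ℝ → ℝ}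
    (hab : a ≤ b) (hD0 : D 0 = f) (hA : 0 ≤ A) (hcont : ∀ k ≤ m, ContinuousOn (D k) (Icc a b))
    (hderiv : ∀ k ≤ m, ∀ x ∈ Ioo a b, HasDerivAt (D k) (D (k + 1) x) x)
    (hnonneg : ∀ k ≤ m + 1, ∀ x ∈ Icc a b, 0 ≤ D k x)
    (hbound : ∀ x ∈ Icc a b, f x ≤ A * D (m + 1) x) :
    (b - a) * f a ^ (m + 2) + (∫ x in a..b, f x) ^ (m + 2) / ((m + 2) * (m ! * A)) ≤
      ∫ x in a..b, f x ^ (m + 2) := by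
  have hf : ContinuousOn f (Icc a b) := hD0 ▸ hcont 0 m.zero_le
  have hf' : ∀ x ∈ Ioo a b, HasDerivAt f (D 1 x) x := hD0 ▸ hderiv 0 m.zero_le
  have hf_nonneg : ∀ x ∈ Icc a b, 0 ≤ f x := hD0 ▸ hnonneg 0 (m + 1).zero_le
  have hf'_nonneg : ∀ x ∈ Ioo a b, 0 ≤ D 1 x :=
    fun x hx => hnonneg 1 (by omega) x (Ioo_subset_Icc_self hx)
  have hfa_le (x : ℝ) (hx : x ∈ Ioo a b) : f a ≤ f x :=
    le_of_hasDerivAt_le_of_le continuousOn_const hf (fun _ _ => hasDerivAt_const _ _) hf'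
      hf'_nonneg le_rfl (Ioo_subset_Icc_self hx)
  have hF := continuousOn_primitive_Icc hab hf
  have hF' (x : ℝ) (hx : x ∈ Ioo a b) := hasDerivAt_primitive_of_mem_Ioo hf hx
  have hF_pow_mul (x : ℝ) (hx : x ∈ Ioo a b) :
      (∫ t in a..x, f t) ^ m * f x ≤ m ! * A * f x ^ m * D 1 x := by
    simpa using pow_mul_le_factorial_mul_pow_mul hD0 hA hcont hderiv hnonneg hbound hF hF'
      intervalIntegral.integral_same le_rfl (Ioo_subset_Icc_self hx)
  simpa [add_assoc, one_add_one_eq_two] using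
    mul_pow_add_pow_div_le_integral_pow_of_pow_mul_le (n := m + 1) hab (by positivity) hf hfa_le
      (hf_nonneg a (left_mem_Icc.2 hab)) fun x hx =>
        pow_succ_mul_le_mul_pow_sub_pow (by positivity) hf hf' hf_nonneg hf'_nonneg hF hF'
          intervalIntegral.integral_same hF_pow_mul (Ioo_subset_Icc_self hx)

theorem le_sSup_abs_div_mul {α : Type*} {s : Set α} {f g : α → ℝ} (hg : ∀ x ∈ s, 0 < g x)
    (hbdd : ∃ C, ∀ x ∈ s, |f x / g x| ≤ C) {x : α} (hx : x ∈ s) :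
    f x ≤ sSup ((fun x => |f x / g x|) '' s) * g x := by
  obtain ⟨C, hC⟩ := hbdd
  rw [← div_le_iff₀ (hg x hx)]
  exact (le_abs_self _).trans (le_csSup ⟨C, forall_mem_image.2 hC⟩ (mem_image_of_mem _ hx))

theorem sub_one_div_factorial_mul (m : ℕ) (A : ℝ) :
    (((m + 2 : ℕ) : ℝ) - 1) / ((m + 2)! * A) = 1 / ((m + 2) * (m ! * A)) := by
  rcases eq_or_ne A 0 with rfl | hA
  · simp
  · rw [Nat.factorial_succ, Nat.factorial_succ]
    push_cast
    field_simp
    ring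

theorem stmt14 (a b : ℝ) (hab : a < b) (n : ℕ) (hn : 2 ≤ n)
    (f : ℝ → ℝ)
    (hf_diff : ∀ i < n - 1,
      DifferentiableOn ℝ (iteratedDerivWithin i f (Set.Icc a b)) (Set.Icc a b))
    (hf_nonneg : ∀ i ≤ n - 2, ∀ x ∈ Set.Icc a b,
      0 ≤ iteratedDerivWithin i f (Set.Icc a b) x)
    (hf_pos' : ∀ x ∈ Set.Icc a b, 0 < iteratedDerivWithin (n - 1) f (Set.Icc a b) x)
    (hbdd : ∃ C : ℝ, ∀ x ∈ Set.Icc a b,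
      |f x / iteratedDerivWithin (n - 1) f (Set.Icc a b) x| ≤ C) :
    (b - a) * f a ^ n +
      (((n : ℝ) - 1) /
          ((n.factorial : ℝ) *
            sSup ((fun x => |f x / iteratedDerivWithin (n - 1) f (Set.Icc a b) x|) ''
              Set.Icc a b))) *
        (∫ x in a..b, f x) ^ n ≤
    ∫ x in a..b, f x ^ n := by
  obtain ⟨m, rfl⟩ : ∃ m, n = m + 2 := ⟨n - 2, by omega⟩
  simp only [show m + 2 - 1 = m + 1 by omega, Nat.add_sub_cancel]
    at hf_diff hf_nonneg hf_pos' hbdd ⊢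
  have hnonneg : ∀ k ≤ m + 1, ∀ x ∈ Icc a b, 0 ≤ iteratedDerivWithin k f (Icc a b) x := by
    intro k hk x hx
    rcases hk.lt_or_eq with hk | rfl
    · exact hf_nonneg k (by omega) x hx
    · exact (hf_pos' x hx).le
  rw [sub_one_div_factorial_mul, one_div_mul_eq_div]
  exact mul_pow_add_pow_div_le_integral_pow hab.le iteratedDerivWithin_zero
    (Real.sSup_nonneg (forall_mem_image.2 fun _ _ => abs_nonneg _))
    (fun k hk => (hf_diff k (by omega)).continuousOn)
    (fun k hk x hx => hasDerivAt_iteratedDerivWithin_Icc (hf_diff k (by omega)) hx) hnonneg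
    (fun x hx => le_sSup_abs_div_mul hf_pos' hbdd hx)
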